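/- arXiv:2304.06014 — 3 statements merged into one kernel-verified Lean document; each statement's English description precedes it below -/
import Mathlib

section
/- If f : [0,1]^k → ℝ_{≥0}^k is uniformly continuous, satisfies f_j(x) = 0 whenever x_j = 1, satisfies ∑_j f_j(x) > B whenever some coordinate x_j = 0, and is strictly decreasing in its own coordinate while weakly increasing in other coordinates (i.e., for y = x + δ·e_j with 0 ≤ x, y < 1 componentwise, f_j(y) < f_j(x) and f_ℓ(y) ≥ f_ℓ(x) for ℓ ≠ j), then for any positive reals B_1,…,B_k with ∑_j B_j = B there exists x ∈ [0,1]^k with f_j(x) = B_j for all j ∈ [k]. -/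
/-- existence of a point where the demand function exactly fills all tiers. -/
theorem tiered_price_existence
    (k : ℕ) (hk : 0 < k) (B : ℝ) (hB : 0 < B)
    (f : (Fin k → ℝ) → (Fin k → ℝ))
    (hnonneg : ∀ x : Fin k → ℝ, (∀ j, x j ∈ Set.Icc (0:ℝ) 1) → ∀ j, 0 ≤ f x j)
    (hUC : UniformContinuousOn f {x : Fin k → ℝ | ∀ j, x j ∈ Set.Icc (0:ℝ) 1})
    (hone : ∀ x : Fin k → ℝ, (∀ j, x j ∈ Set.Icc (0:ℝ) 1) → ∀ j, x j = 1 → f x j = 0)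
    (hzero : ∀ x : Fin k → ℝ, (∀ j, x j ∈ Set.Icc (0:ℝ) 1) → (∃ j, x j = 0) →
      B < ∑ j, f x j)
    (hmono : ∀ (x : Fin k → ℝ) (j : Fin k) (δ : ℝ), 0 < δ →
      (∀ ℓ, 0 ≤ x ℓ) → (∀ ℓ, x ℓ < 1) → (∀ ℓ, ((fun ℓ => x ℓ + if ℓ = j then δ else 0)) ℓ < 1) →
      f ((fun ℓ => x ℓ + if ℓ = j then δ else 0)) j < f x j ∧
      ∀ ℓ, ℓ ≠ j → f x ℓ ≤ f ((fun ℓ => x ℓ + if ℓ = j then δ else 0)) ℓ)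
    (Bv : Fin k → ℝ) (hBpos : ∀ j, 0 < Bv j) (hBsum : ∑ j, Bv j = B) :
    ∃ x : Fin k → ℝ, (∀ j, x j ∈ Set.Icc (0:ℝ) 1) ∧ ∀ j, f x j = Bv j := by
  classical
  set cube : Set (Fin k → ℝ) := {x : Fin k → ℝ | ∀ j, x j ∈ Set.Icc (0:ℝ) 1} with hcubedef
  have hcont : ContinuousOn f cube := hUC.continuousOn
  have hcontj : ∀ j : Fin k, ContinuousOn (fun x => f x j) cube := fun j =>
    (continuous_apply j).comp_continuousOn hcont
  -- the update function
  set upd : (Fin k → ℝ) → Fin k → ℝ → (Fin k → ℝ) :=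
    fun x j t ℓ => if ℓ = j then t else x ℓ with hupddef
  have upd_mem : ∀ (x : Fin k → ℝ) (j : Fin k) (t : ℝ), x ∈ cube → t ∈ Set.Icc (0:ℝ) 1 →
      upd x j t ∈ cube := by
    intro x j t hx ht ℓ
    simp only [hupddef]
    split_ifs
    · exact ht
    · exact hx ℓ
  have upd_self : ∀ (x : Fin k → ℝ) (j : Fin k), upd x j (x j) = x := by
    intro x j
    funext ℓ
    simp only [hupddef]
    split_ifs with h
    · rw [h]
    · rfl
  have upd_cont : ∀ (x : Fin k → ℝ) (j : Fin k), Continuous (fun t => upd x j t) := by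
    intro x j
    apply continuous_pi
    intro ℓ
    simp only [hupddef]
    split_ifs
    · exact continuous_id
    · exact continuous_const
  -- interior weak monotonicity
  have mono_int : ∀ a b : Fin k → ℝ, (∀ ℓ, 0 ≤ a ℓ) → (∀ ℓ, b ℓ < 1) → (∀ ℓ, a ℓ ≤ b ℓ) →
      ∀ j : Fin k, a j = b j → f a j ≤ f b j := by
    intro a b ha hb hab j hj
    have key : ∀ s : Finset (Fin k), f a j ≤ f (fun ℓ => if ℓ ∈ s then b ℓ else a ℓ) j := by
      intro s
      induction s using Finset.induction_on with
      | empty => simp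
      | @insert i s hi ih =>
        set c : Fin k → ℝ := fun ℓ => if ℓ ∈ s then b ℓ else a ℓ with hc
        have hci : c i = a i := by simp [hc, hi]
        have hcle : ∀ ℓ, a ℓ ≤ c ℓ ∧ c ℓ ≤ b ℓ := by
          intro ℓ
          simp only [hc]
          split_ifs
          · exact ⟨hab ℓ, le_refl _⟩
          · exact ⟨le_refl _, hab ℓ⟩
        have hc' : (fun ℓ => if ℓ ∈ insert i s then b ℓ else a ℓ)
            = fun ℓ => c ℓ + if ℓ = i then b i - a i else 0 := by
          funext ℓ
          by_cases hℓ : ℓ = i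
          · subst hℓ
            simp [hc, hi]
          · simp [hc, hℓ, Finset.mem_insert]
        rw [hc']
        rcases eq_or_lt_of_le (hab i) with heq | hlt
        · have : (fun ℓ => c ℓ + if ℓ = i then b i - a i else 0) = c := by
            funext ℓ
            split_ifs with h
            · subst h; rw [← heq]; ring
            · ring
          rw [this]; exact ih
        · have hij : j ≠ i := by
            intro h
            subst h
            rw [hj] at hlt
            exact lt_irrefl _ hlt
          have h1 : ∀ ℓ, 0 ≤ c ℓ := fun ℓ => le_trans (ha ℓ) (hcle ℓ).1
          have h2 : ∀ ℓ, c ℓ < 1 := fun ℓ => lt_of_le_of_lt (hcle ℓ).2 (hb ℓ)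
          have h3 : ∀ ℓ, (fun ℓ => c ℓ + if ℓ = i then b i - a i else 0) ℓ < 1 := by
            intro ℓ
            by_cases hℓ : ℓ = i
            · subst hℓ
              simp only [if_pos rfl, hci]
              calc a ℓ + (b ℓ - a ℓ) = b ℓ := by ring
                _ < 1 := hb ℓ
            · simp only [if_neg hℓ, add_zero]
              exact h2 ℓ
          have := (hmono c i (b i - a i) (by linarith [hci, hlt]) h1 h2 h3).2 j hij
          exact le_trans ih this
    have hb' : (fun ℓ => if ℓ ∈ (Finset.univ : Finset (Fin k)) then b ℓ else a ℓ) = b := by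
      funext ℓ; simp
    have := key Finset.univ
    rwa [hb'] at this
  -- full weak monotonicity via continuity
  have mono_f : ∀ a b : Fin k → ℝ, a ∈ cube → b ∈ cube → (∀ ℓ, a ℓ ≤ b ℓ) →
      ∀ j : Fin k, a j = b j → f a j ≤ f b j := by
    intro a b ha hb hab j hj
    have key : ∀ s : ℝ, s ∈ Set.Ico (0:ℝ) 1 → f (s • a) j ≤ f (s • b) j := by
      intro s hs
      apply mono_int
      · intro ℓ
        exact mul_nonneg hs.1 (ha ℓ).1
      · intro ℓ
        calc s * b ℓ ≤ s * 1 := by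
              apply mul_le_mul_of_nonneg_left (hb ℓ).2 hs.1
          _ < 1 := by linarith [hs.2]
      · intro ℓ
        exact mul_le_mul_of_nonneg_left (hab ℓ) hs.1
      · show s * a j = s * b j
        rw [hj]
    have hmemcube : ∀ (c : Fin k → ℝ), c ∈ cube → ∀ s ∈ Set.Ico (0:ℝ) 1, s • c ∈ cube := by
      intro c hc s hs ℓ
      constructor
      · exact mul_nonneg hs.1 (hc ℓ).1
      · calc s * c ℓ ≤ 1 * 1 := by
              apply mul_le_mul hs.2.le (hc ℓ).2 (hc ℓ).1 zero_le_one
        _ = 1 := by ring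
    have htend : ∀ (c : Fin k → ℝ), c ∈ cube →
        Filter.Tendsto (fun s : ℝ => f (s • c) j) (nhdsWithin 1 (Set.Iio 1)) (nhds (f c j)) := by
      intro c hc
      have h1 : Filter.Tendsto (fun s : ℝ => s • c) (nhdsWithin 1 (Set.Iio 1))
          (nhdsWithin c cube) := by
        apply tendsto_nhdsWithin_of_tendsto_nhds_of_eventually_within
        · have : Filter.Tendsto (fun s : ℝ => s • c) (nhds 1) (nhds ((1:ℝ) • c)) :=
            (continuous_id.smul continuous_const).tendsto 1
          rw [one_smul] at this
          exact this.mono_left nhdsWithin_le_nhds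
        · have h0 : Set.Ioo (0:ℝ) 1 ∈ nhdsWithin (1:ℝ) (Set.Iio 1) := by
            apply mem_nhdsWithin_iff_exists_mem_nhds_inter.2
            exact ⟨Set.Ioi 0, Ioi_mem_nhds one_pos, by
              intro t ht
              exact ⟨ht.1, ht.2⟩⟩
          filter_upwards [h0] with s hs
          exact hmemcube c hc s ⟨hs.1.le, hs.2⟩
      exact ((hcontj j) c hc).tendsto.comp h1
    have hineq : ∀ᶠ s in nhdsWithin (1:ℝ) (Set.Iio 1), f (s • a) j ≤ f (s • b) j := by
      have h0 : Set.Ioo (0:ℝ) 1 ∈ nhdsWithin (1:ℝ) (Set.Iio 1) := by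
        apply mem_nhdsWithin_iff_exists_mem_nhds_inter.2
        exact ⟨Set.Ioi 0, Ioi_mem_nhds one_pos, by
          intro t ht
          exact ⟨ht.1, ht.2⟩⟩
      filter_upwards [h0] with s hs
      exact key s ⟨hs.1.le, hs.2⟩
    exact le_of_tendsto_of_tendsto (htend a ha) (htend b hb) hineq
  -- the best-response sets and map
  set S : (Fin k → ℝ) → Fin k → Set ℝ :=
    fun x j => {t ∈ Set.Icc (0:ℝ) 1 | f (upd x j t) j ≤ Bv j} with hSdef
  set T : (Fin k → ℝ) → Fin k → ℝ := fun x j => sInf (S x j) with hTdef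
  have hφcont : ∀ (x : Fin k → ℝ), x ∈ cube → ∀ j : Fin k,
      ContinuousOn (fun t => f (upd x j t) j) (Set.Icc (0:ℝ) 1) := by
    intro x hx j
    apply ContinuousOn.comp (hcontj j) ((upd_cont x j).continuousOn)
    intro t ht
    exact upd_mem x j t hx ht
  have hS1 : ∀ (x : Fin k → ℝ), x ∈ cube → ∀ j : Fin k, (1:ℝ) ∈ S x j := by
    intro x hx j
    refine ⟨⟨zero_le_one, le_refl 1⟩, ?_⟩
    rw [hone (upd x j 1) (upd_mem x j 1 hx ⟨zero_le_one, le_refl 1⟩) j (by simp [hupddef])]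
    exact (hBpos j).le
  have hScomp : ∀ (x : Fin k → ℝ), x ∈ cube → ∀ j : Fin k, IsCompact (S x j) := by
    intro x hx j
    have hSeq : S x j = Set.Icc (0:ℝ) 1 ∩ (fun t => f (upd x j t) j) ⁻¹' Set.Iic (Bv j) := by
      ext t; simp [hSdef, Set.mem_sep_iff]
    have hclosed : IsClosed (S x j) := by
      rw [hSeq]
      exact (hφcont x hx j).preimage_isClosed_of_isClosed isClosed_Icc isClosed_Iic
    apply IsCompact.of_isClosed_subset isCompact_Icc hclosed
    intro t ht
    exact ht.1
  have hTmem : ∀ (x : Fin k → ℝ), x ∈ cube → ∀ j : Fin k, T x j ∈ S x j := by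
    intro x hx j
    exact (hScomp x hx j).sInf_mem ⟨1, hS1 x hx j⟩
  have hTbdd : ∀ (x : Fin k → ℝ), x ∈ cube → ∀ j : Fin k, BddBelow (S x j) := by
    intro x hx j
    exact (hScomp x hx j).bddBelow
  have hTicc : ∀ (x : Fin k → ℝ), x ∈ cube → ∀ j : Fin k, T x j ∈ Set.Icc (0:ℝ) 1 := by
    intro x hx j
    exact (hTmem x hx j).1
  have hTle : ∀ (x : Fin k → ℝ), x ∈ cube → ∀ j : Fin k, f (upd x j (T x j)) j ≤ Bv j := by
    intro x hx j
    exact (hTmem x hx j).2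
  -- monotonicity of T
  have hTmono : ∀ a b : Fin k → ℝ, a ∈ cube → b ∈ cube → (∀ ℓ, a ℓ ≤ b ℓ) →
      ∀ j : Fin k, T a j ≤ T b j := by
    intro a b ha hb hab j
    apply csInf_le_csInf (hTbdd a ha j) ⟨1, hS1 b hb j⟩
    intro t ht
    refine ⟨ht.1, le_trans ?_ ht.2⟩
    apply mono_f (upd a j t) (upd b j t) (upd_mem a j t ha ht.1) (upd_mem b j t hb ht.1)
    · intro ℓ
      simp only [hupddef]
      split_ifs
      · exact le_refl t
      · exact hab ℓ
    · simp [hupddef]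
  -- the set of post-fixed points
  set P : Set (Fin k → ℝ) := {x | x ∈ cube ∧ ∀ j, T x j ≤ x j} with hPdef
  have honemem : (fun _ => (1:ℝ)) ∈ P := by
    constructor
    · intro j; exact ⟨zero_le_one, le_refl 1⟩
    · intro j
      exact (hTicc (fun _ => (1:ℝ)) (fun j => ⟨zero_le_one, le_refl 1⟩) j).2
  set xs : Fin k → ℝ := fun j => sInf ((fun x : Fin k → ℝ => x j) '' P) with hxsdef
  have hPbdd : ∀ j : Fin k, BddBelow ((fun x : Fin k → ℝ => x j) '' P) := by
    intro j
    refine ⟨0, ?_⟩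
    rintro y ⟨x, hx, rfl⟩
    exact (hx.1 j).1
  have hPne : ∀ j : Fin k, ((fun x : Fin k → ℝ => x j) '' P).Nonempty := by
    intro j
    exact ⟨1, (fun _ => (1:ℝ)), honemem, rfl⟩
  have hxs_le : ∀ x ∈ P, ∀ j, xs j ≤ x j := by
    intro x hx j
    exact csInf_le (hPbdd j) ⟨x, hx, rfl⟩
  have hxscube : xs ∈ cube := by
    intro j
    constructor
    · apply le_csInf (hPne j)
      rintro y ⟨x, hx, rfl⟩
      exact (hx.1 j).1
    · exact le_trans (hxs_le _ honemem j) (le_refl 1)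
  have hTxs_le : ∀ j, T xs j ≤ xs j := by
    intro j
    apply le_csInf (hPne j)
    rintro y ⟨x, hx, rfl⟩
    exact le_trans (hTmono xs x hxscube hx.1 (hxs_le x hx) j) (hx.2 j)
  have hxsP : xs ∈ P := ⟨hxscube, hTxs_le⟩
  have hTxscube : T xs ∈ cube := fun j => hTicc xs hxscube j
  have hTxsP : T xs ∈ P := by
    refine ⟨hTxscube, ?_⟩
    intro j
    exact hTmono (T xs) xs hTxscube hxscube hTxs_le j
  have hfix : ∀ j, T xs j = xs j := by
    intro j
    exact le_antisymm (hTxs_le j) (csInf_le (hPbdd j) ⟨T xs, hTxsP, rfl⟩)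
  -- f xs j ≤ Bv j for all j
  have hle : ∀ j, f xs j ≤ Bv j := by
    intro j
    have := hTle xs hxscube j
    rwa [hfix j, upd_self] at this
  -- all coordinates positive
  have hpos : ∀ j, 0 < xs j := by
    intro j
    rcases lt_or_eq_of_le (hxscube j).1 with h | h
    · exact h
    · exfalso
      have h1 : B < ∑ ℓ, f xs ℓ := hzero xs hxscube ⟨j, h.symm⟩
      have h2 : ∑ ℓ, f xs ℓ ≤ ∑ ℓ, Bv ℓ := Finset.sum_le_sum (fun ℓ _ => hle ℓ)
      rw [hBsum] at h2
      linarith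
  -- Bv j ≤ f xs j
  have hge : ∀ j, Bv j ≤ f xs j := by
    intro j
    have hIco : ∀ t ∈ Set.Ico (0:ℝ) (xs j), Bv j ≤ f (upd xs j t) j := by
      intro t ht
      by_contra hcon
      push_neg at hcon
      have htmem : t ∈ S xs j := ⟨⟨ht.1, le_trans ht.2.le (hxscube j).2⟩, hcon.le⟩
      have : T xs j ≤ t := csInf_le (hTbdd xs hxscube j) htmem
      rw [hfix j] at this
      linarith [ht.2]
    have hnebot : Filter.NeBot (nhdsWithin (xs j) (Set.Ico 0 (xs j))) := by
      rw [← mem_closure_iff_nhdsWithin_neBot, closure_Ico (ne_of_lt (hpos j))]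
      exact ⟨(hpos j).le, le_refl _⟩
    have htend : Filter.Tendsto (fun t => f (upd xs j t) j)
        (nhdsWithin (xs j) (Set.Ico 0 (xs j))) (nhds (f (upd xs j (xs j)) j)) := by
      have hcw : ContinuousWithinAt (fun t => f (upd xs j t) j) (Set.Icc (0:ℝ) 1) (xs j) :=
        (hφcont xs hxscube j) (xs j) (hxscube j)
      apply hcw.tendsto.mono_left
      apply nhdsWithin_mono
      intro t ht
      exact ⟨ht.1, le_trans ht.2.le (hxscube j).2⟩
    have := ge_of_tendsto htend (by
      filter_upwards [self_mem_nhdsWithin] with t ht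
      exact hIco t ht)
    rwa [upd_self] at this
  exact ⟨xs, hxscube, fun j => le_antisymm (hle j) (hge j)⟩
end

section
/- Suppose a transaction with base value v_0 and discount function h satisfying h(d_{j+1}) < μ·h(d_j) (with 0 < μ < 1) has nonnegative utility in tier j+1 and weakly prefers tier j+1 to tier j, i.e., v_0·h(d_{j+1}) − p_{j+1} ≥ 0 and v_0·h(d_j) − p_j < v_0·h(d_{j+1}) − p_{j+1}. Then p_{j+1} < μ·p_j. -/
/-- the key algebraic step showing price separation `p_{j+1} < μ·p_j`. -/
theorem price_separation
    (v0 hj hj1 μ pj pj1 : ℝ)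
    (hv0 : 0 < v0) (hhj : 0 < hj) (hhj1 : 0 < hj1)
    (hμ0 : 0 < μ) (hμ1 : μ < 1)
    (hsep : hj1 < μ * hj)
    (hpj : 0 ≤ pj) (hpj1 : 0 ≤ pj1)
    (hutil : 0 ≤ v0 * hj1 - pj1)
    (hpref : v0 * hj - pj < v0 * hj1 - pj1) :
    pj1 < μ * pj := by
  rcases le_or_gt pj (v0 * hj) with h | h
  · nlinarith
  · nlinarith
end

section
/- In Observation 4.8's instance (two tiers of size 1 each, delays d_1 < d_2, n = 3 arrivals, where 1/3 of transactions have value uniform on [0,1] at delay d_1 and value 0 at delay d_2, and 2/3 have value uniform on [0,1] at both delays), there exists no price pair (p_1, p_2) that is simultaneously compatible (expected demand of each tier ≤ 1) and EIP-1559 stable (any tier with expected demand < 1 has price 0). -/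
/-- Probability that a uniform `[0,1]` base value is at least `x`. -/
noncomputable def tailProb (x : ℝ) : ℝ := 1 - min 1 (max 0 x)

/-- Expected demand of tier 1 in the instance of Observation 4.8:
type A (mass 1/3 of `n = 3`) joins tier 1 iff its value exceeds `p1`;
type B (mass 2/3) prefers the cheaper tier, splitting evenly on ties. -/
noncomputable def ET1 (p1 p2 : ℝ) : ℝ :=
  tailProb p1 + (if p1 < p2 then 2 * tailProb p1
    else if p1 = p2 then tailProb p1 else 0)

/-- Expected demand of tier 2 in the instance of Observation 4.8. -/
noncomputable def ET2 (p1 p2 : ℝ) : ℝ :=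
  if p2 < p1 then 2 * tailProb p2
    else if p1 = p2 then tailProb p1 else 0

/-- in Observation 4.8's instance, no price pair is both
compatible and EIP-1559 stable. -/
theorem no_stable_prices :
    ¬ ∃ p1 p2 : ℝ, 0 ≤ p1 ∧ 0 ≤ p2 ∧
      ET1 p1 p2 ≤ 1 ∧ ET2 p1 p2 ≤ 1 ∧
      (ET1 p1 p2 < 1 → p1 = 0) ∧ (ET2 p1 p2 < 1 → p2 = 0) := by
  rintro ⟨p1, p2, h1, h2, hE1, hE2, hs1, hs2⟩
  have t1 : tailProb p1 = 1 - min 1 p1 := by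
    simp [tailProb, max_eq_right h1]
  have t2 : tailProb p2 = 1 - min 1 p2 := by
    simp [tailProb, max_eq_right h2]
  rcases lt_trichotomy p1 p2 with h | h | h
  · -- tier 2 is empty, so p2 = 0, contradicting p2 > p1 ≥ 0
    have hz : ET2 p1 p2 = 0 := by simp [ET2, not_lt.mpr h.le, h.ne]
    have : p2 = 0 := hs2 (by rw [hz]; norm_num)
    linarith
  · -- equal prices
    subst h
    have hET1 : ET1 p1 p1 = 2 * tailProb p1 := by simp [ET1]; ring
    have hET2 : ET2 p1 p1 = tailProb p1 := by simp [ET2]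
    have ht : tailProb p1 ≤ 1 / 2 := by rw [hET1] at hE1; linarith
    have hp0 : p1 = 0 := hs2 (by rw [hET2]; linarith)
    subst hp0
    rw [hET1, t1] at hE1
    norm_num at hE1
  · -- p2 < p1
    have hET2 : ET2 p1 p2 = 2 * tailProb p2 := by simp [ET2, h]
    have hET1 : ET1 p1 p2 = tailProb p1 := by
      simp [ET1, not_lt.mpr h.le, h.ne']
    have hp2 : (1:ℝ)/2 ≤ min 1 p2 := by rw [hET2, t2] at hE2; linarith
    have hp2' : (1:ℝ)/2 ≤ p2 := le_trans hp2 (min_le_right _ _)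
    have hminpos : 0 < min 1 p1 := lt_min (by norm_num) (by linarith)
    have : p1 = 0 := hs1 (by rw [hET1, t1]; linarith)
    linarith
end
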